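/- arXiv:2508.11382 — 6 statements merged into one kernel-verified Lean document; each statement's English description precedes it below -/
import Mathlib

section
/- Let (A, ·) be a supercommutative associative superalgebra and R : A → A an even linear map satisfying the Rota–Baxter identity R(x)R(y) = R(R(x)y + xR(y)) for all x, y ∈ A. Then the product a ∘ b := R(a)·b makes A a Zinbiel superalgebra, i.e., for all homogeneous a, b, c: a∘(b∘c) = (a∘b)∘c + (−1)^{|a||b|}(b∘a)∘c. -/
theorem rotaBaxter_mul_mul_eq_add {K A : Type*} [CommSemiring K] [AddCommMonoid A] [Module K A]
    (mul : A →ₗ[K] A →ₗ[K] A) (hassoc : ∀ a b c : A, mul (mul a b) c = mul a (mul b c))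
    (R : A →ₗ[K] A) (hRB : ∀ x y : A, mul (R x) (R y) = R (mul (R x) y + mul x (R y)))
    (a b c : A) :
    mul (R a) (mul (R b) c) = mul (R (mul (R a) b)) c + mul (R (mul a (R b))) c := by
  rw [← hassoc, hRB, map_add, map_add, LinearMap.add_apply]

theorem rotaBaxter_zinbiel_general {K A : Type*} [Field K]
    [AddCommGroup A] [Module K A]
    (grade : ZMod 2 → Submodule K A)
    (mul : A →ₗ[K] A →ₗ[K] A)
    (hcomm : ∀ i j : ZMod 2, ∀ a ∈ grade i, ∀ b ∈ grade j,
      mul a b = ((-1 : K) ^ (i.val * j.val)) • mul b a)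
    (hassoc : ∀ a b c : A, mul (mul a b) c = mul a (mul b c))
    (R : A →ₗ[K] A)
    (hReven : ∀ i : ZMod 2, ∀ a ∈ grade i, R a ∈ grade i)
    (hRB : ∀ x y : A, mul (R x) (R y) = R (mul (R x) y + mul x (R y))) :
    ∀ i j k : ZMod 2, ∀ a ∈ grade i, ∀ b ∈ grade j, ∀ c ∈ grade k,
      mul (R a) (mul (R b) c) =
        mul (R (mul (R a) b)) c +
          ((-1 : K) ^ (i.val * j.val)) • mul (R (mul (R b) a)) c := by
  intro i j k a ha b hb c _
  have hswap : mul a (R b) = ((-1 : K) ^ (i.val * j.val)) • mul (R b) a :=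
    hcomm i j a ha (R b) (hReven j b hb)
  rw [rotaBaxter_mul_mul_eq_add mul hassoc R hRB, hswap, map_smul, LinearMap.map_smul₂]

/-- A supercommutative associative superalgebra with an even Rota–Baxter
operator `R` becomes a Zinbiel superalgebra under `a ∘ b := R(a)·b`. -/
theorem rotaBaxter_zinbiel {K A : Type*} [Field K] [CharZero K]
    [AddCommGroup A] [Module K A]
    (grade : ZMod 2 → Submodule K A)
    (mul : A →ₗ[K] A →ₗ[K] A)
    (hgr : ∀ i j : ZMod 2, ∀ a ∈ grade i, ∀ b ∈ grade j, mul a b ∈ grade (i + j))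
    (hcomm : ∀ i j : ZMod 2, ∀ a ∈ grade i, ∀ b ∈ grade j,
      mul a b = ((-1 : K) ^ (i.val * j.val)) • mul b a)
    (hassoc : ∀ a b c : A, mul (mul a b) c = mul a (mul b c))
    (R : A →ₗ[K] A)
    (hReven : ∀ i : ZMod 2, ∀ a ∈ grade i, R a ∈ grade i)
    (hRB : ∀ x y : A, mul (R x) (R y) = R (mul (R x) y + mul x (R y))) :
    ∀ i j k : ZMod 2, ∀ a ∈ grade i, ∀ b ∈ grade j, ∀ c ∈ grade k,
      mul (R a) (mul (R b) c) =
        mul (R (mul (R a) b)) c +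
          ((-1 : K) ^ (i.val * j.val)) • mul (R (mul (R b) a)) c :=
  rotaBaxter_zinbiel_general grade mul hcomm hassoc R hReven hRB
end

section
/- Let (A, ·) be a supercommutative associative superalgebra and R : A → A an odd linear map satisfying the odd Rota–Baxter identity R(x)R(y) = R((−1)^{|x|+1}R(x)y + xR(y)) for all homogeneous x, y ∈ A. Then the product a ∘ b := R(a)·b satisfies a∘(b∘c) = (−1)^{|a|+1}(a∘b)∘c + (−1)^{|a|(|b|+1)}(b∘a)∘c for all homogeneous a, b, c. -/
theorem oddRotaBaxter_oddZinbiel_general {K A : Type*} [Field K]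
    [AddCommGroup A] [Module K A]
    (grade : ZMod 2 → Submodule K A)
    (mul : A →ₗ[K] A →ₗ[K] A)
    (hcomm : ∀ i j : ZMod 2, ∀ a ∈ grade i, ∀ b ∈ grade j,
      mul a b = ((-1 : K) ^ (i.val * j.val)) • mul b a)
    (hassoc : ∀ a b c : A, mul (mul a b) c = mul a (mul b c))
    (R : A →ₗ[K] A)
    (hRodd : ∀ i : ZMod 2, ∀ a ∈ grade i, R a ∈ grade (i + 1))
    (hRB : ∀ i : ZMod 2, ∀ x ∈ grade i, ∀ y : A,
      mul (R x) (R y) = R (((-1 : K) ^ ((i + 1 : ZMod 2).val)) • mul (R x) y + mul x (R y))) :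
    ∀ i j k : ZMod 2, ∀ a ∈ grade i, ∀ b ∈ grade j, ∀ c ∈ grade k,
      mul (R a) (mul (R b) c) =
        ((-1 : K) ^ ((i + 1 : ZMod 2).val)) • mul (R (mul (R a) b)) c +
          ((-1 : K) ^ (i.val * ((j + 1 : ZMod 2).val))) • mul (R (mul (R b) a)) c := by
  intro i j _ a ha b hb c _
  have hswap : mul a (R b) = ((-1 : K) ^ (i.val * (j + 1 : ZMod 2).val)) • mul (R b) a :=
    hcomm i (j + 1) a ha (R b) (hRodd j b hb)
  calc mul (R a) (mul (R b) c)
      = mul (mul (R a) (R b)) c := (hassoc _ _ _).symm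
    _ = mul (R (((-1 : K) ^ ((i + 1 : ZMod 2).val)) • mul (R a) b + mul a (R b))) c := by
      rw [hRB i a ha b]
    _ = _ := by
      rw [hswap]
      simp only [map_add, map_smul, LinearMap.add_apply, LinearMap.smul_apply]

/-- A supercommutative associative superalgebra with an odd Rota–Baxter
operator `R` satisfies the odd-Zinbiel identity for `a ∘ b := R(a)·b`. -/
theorem oddRotaBaxter_oddZinbiel {K A : Type*} [Field K] [CharZero K]
    [AddCommGroup A] [Module K A]
    (grade : ZMod 2 → Submodule K A)
    (mul : A →ₗ[K] A →ₗ[K] A)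
    (hgr : ∀ i j : ZMod 2, ∀ a ∈ grade i, ∀ b ∈ grade j, mul a b ∈ grade (i + j))
    (hcomm : ∀ i j : ZMod 2, ∀ a ∈ grade i, ∀ b ∈ grade j,
      mul a b = ((-1 : K) ^ (i.val * j.val)) • mul b a)
    (hassoc : ∀ a b c : A, mul (mul a b) c = mul a (mul b c))
    (R : A →ₗ[K] A)
    (hRodd : ∀ i : ZMod 2, ∀ a ∈ grade i, R a ∈ grade (i + 1))
    (hRB : ∀ i : ZMod 2, ∀ x ∈ grade i, ∀ y : A,
      mul (R x) (R y) = R (((-1 : K) ^ ((i + 1 : ZMod 2).val)) • mul (R x) y + mul x (R y))) :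
    ∀ i j k : ZMod 2, ∀ a ∈ grade i, ∀ b ∈ grade j, ∀ c ∈ grade k,
      mul (R a) (mul (R b) c) =
        ((-1 : K) ^ ((i + 1 : ZMod 2).val)) • mul (R (mul (R a) b)) c +
          ((-1 : K) ^ (i.val * ((j + 1 : ZMod 2).val))) • mul (R (mul (R b) a)) c :=
  oddRotaBaxter_oddZinbiel_general grade mul hcomm hassoc R hRodd hRB
end

section
/- Let (A, ∘) be a Zinbiel superalgebra and R : A → A an even Rota–Baxter operator (R(x)∘R(y) = R(R(x)∘y + x∘R(y))). Define a new product a ∘₁ b := R(a)∘b + a∘R(b). Then (A, ∘₁) is again a Zinbiel superalgebra. -/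
section RotaBaxter

variable {K A : Type*} [CommSemiring K] [AddCommMonoid A] [Module K A]

def rotaBaxterProduct (mul : A →ₗ[K] A →ₗ[K] A) (R : A →ₗ[K] A) : A →ₗ[K] A →ₗ[K] A :=
  mul.compl₁₂ R LinearMap.id + mul.compl₂ R

@[simp]
lemma rotaBaxterProduct_apply (mul : A →ₗ[K] A →ₗ[K] A) (R : A →ₗ[K] A) (a b : A) :
    rotaBaxterProduct mul R a b = mul (R a) b + mul a (R b) := rfl

/-- For homogeneous `a, b` of a Zinbiel superalgebra this holds with `ε = (-1) ^ (|a| |b|)`. -/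
def ZinbielAt (mul : A →ₗ[K] A →ₗ[K] A) (ε : K) (a b : A) : Prop :=
  ∀ c, mul a (mul b c) = mul (mul a b) c + ε • mul (mul b a) c

/-- Expanding `a ∘₁ (b ∘₁ c)` gives `R a ∘ (R b ∘ c) + R a ∘ (b ∘ R c) + a ∘ (R b ∘ R c)`; the
Zinbiel identity for the pairs `(R a, R b)`, `(R a, b)`, `(a, R b)` and the Rota–Baxter identity
regroup the result into `(a ∘₁ b) ∘₁ c + ε (b ∘₁ a) ∘₁ c`. -/
theorem ZinbielAt.rotaBaxterProduct {mul : A →ₗ[K] A →ₗ[K] A} {R : A →ₗ[K] A}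
    (hRB : ∀ x y : A, mul (R x) (R y) = R (mul (R x) y + mul x (R y))) {ε : K} {a b : A}
    (hRR : ZinbielAt mul ε (R a) (R b)) (hR1 : ZinbielAt mul ε (R a) b)
    (h1R : ZinbielAt mul ε a (R b)) :
    ZinbielAt (rotaBaxterProduct mul R) ε a b := by
  intro c
  simp only [rotaBaxterProduct_apply]
  rw [← hRB b c, ← hRB a b, ← hRB b a]
  simp only [map_add, LinearMap.add_apply, smul_add]
  rw [hRR c, hR1 (R c), h1R (R c)]
  abel

end RotaBaxter

theorem zinbiel_new_product_zinbiel_general {K A : Type*} [Field K]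
    [AddCommGroup A] [Module K A]
    (grade : ZMod 2 → Submodule K A)
    (mul : A →ₗ[K] A →ₗ[K] A)
    (hZinbiel : ∀ i j : ZMod 2, ∀ a ∈ grade i, ∀ b ∈ grade j, ∀ c : A,
      mul a (mul b c) =
        mul (mul a b) c + ((-1 : K) ^ (i.val * j.val)) • mul (mul b a) c)
    (R : A →ₗ[K] A)
    (hReven : ∀ i : ZMod 2, ∀ a ∈ grade i, R a ∈ grade i)
    (hRB : ∀ x y : A, mul (R x) (R y) = R (mul (R x) y + mul x (R y))) :
    ∀ i j k : ZMod 2, ∀ a ∈ grade i, ∀ b ∈ grade j, ∀ c ∈ grade k,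
      -- a ∘₁ (b ∘₁ c)
      mul (R a) (mul (R b) c + mul b (R c)) + mul a (R (mul (R b) c + mul b (R c))) =
        -- (a ∘₁ b) ∘₁ c
        (mul (R (mul (R a) b + mul a (R b))) c + mul (mul (R a) b + mul a (R b)) (R c)) +
        -- (−1)^{|a||b|} (b ∘₁ a) ∘₁ c
        ((-1 : K) ^ (i.val * j.val)) •
          (mul (R (mul (R b) a + mul b (R a))) c + mul (mul (R b) a + mul b (R a)) (R c)) := by
  intro i j _ a ha b hb c _
  have hZ : ZinbielAt (rotaBaxterProduct mul R) ((-1 : K) ^ (i.val * j.val)) a b :=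
    ZinbielAt.rotaBaxterProduct hRB
      (hZinbiel i j _ (hReven i a ha) _ (hReven j b hb))
      (hZinbiel i j _ (hReven i a ha) b hb)
      (hZinbiel i j a ha _ (hReven j b hb))
  simpa only [rotaBaxterProduct_apply] using hZ c

/-- If `(A,∘)` is a Zinbiel superalgebra and `R` an even Rota–Baxter
operator, then `a ∘₁ b := R(a)∘b + a∘R(b)` again makes `A` a Zinbiel superalgebra. -/
theorem zinbiel_new_product_zinbiel {K A : Type*} [Field K] [CharZero K]
    [AddCommGroup A] [Module K A]
    (grade : ZMod 2 → Submodule K A)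
    (mul : A →ₗ[K] A →ₗ[K] A)
    (hgr : ∀ i j : ZMod 2, ∀ a ∈ grade i, ∀ b ∈ grade j, mul a b ∈ grade (i + j))
    (hZinbiel : ∀ i j : ZMod 2, ∀ a ∈ grade i, ∀ b ∈ grade j, ∀ c : A,
      mul a (mul b c) =
        mul (mul a b) c + ((-1 : K) ^ (i.val * j.val)) • mul (mul b a) c)
    (R : A →ₗ[K] A)
    (hReven : ∀ i : ZMod 2, ∀ a ∈ grade i, R a ∈ grade i)
    (hRB : ∀ x y : A, mul (R x) (R y) = R (mul (R x) y + mul x (R y))) :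
    ∀ i j k : ZMod 2, ∀ a ∈ grade i, ∀ b ∈ grade j, ∀ c ∈ grade k,
      -- a ∘₁ (b ∘₁ c)
      mul (R a) (mul (R b) c + mul b (R c)) + mul a (R (mul (R b) c + mul b (R c))) =
        -- (a ∘₁ b) ∘₁ c
        (mul (R (mul (R a) b + mul a (R b))) c + mul (mul (R a) b + mul a (R b)) (R c)) +
        -- (−1)^{|a||b|} (b ∘₁ a) ∘₁ c
        ((-1 : K) ^ (i.val * j.val)) •
          (mul (R (mul (R b) a + mul b (R a))) c + mul (mul (R b) a + mul b (R a)) (R c)) :=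
  zinbiel_new_product_zinbiel_general grade mul hZinbiel R hReven hRB
end

section
/- Let (A, ∘) be a Zinbiel superalgebra, R an even Rota–Baxter operator on A, and define products inductively by a ∘₀ b = a∘b and a ∘_{i+1} b = R(a) ∘ᵢ b + a ∘ᵢ R(b). Then (A, ∘ᵢ) is a Zinbiel superalgebra for every i ≥ 0. -/
/-!
Writing `x ∘_R y = R(x) ∘ y + x ∘ R(y)`, the recursion gives `∘_{n+1} = (∘_R)_n`: the family
built from `∘_R` is the family built from `∘` shifted by one. So it suffices to show that `∘_R` is
again Zinbiel with `R` still Rota–Baxter for it, and induct on `n` with the product generalized.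
Expanding `a ∘_R (b ∘_R c)` and using the Rota–Baxter identity to pull `R` out of `R(a) ∘ R(b)`,
the Zinbiel identity for `∘_R` is the sum of those for `∘` at `(Ra, Rb, c)`, `(Ra, b, Rc)` and
`(a, Rb, Rc)`; this is where `R` must be even.
-/

/-- The inductively defined family of products `∘ᵢ`:
`a ∘₀ b = a ∘ b` and `a ∘_{i+1} b = R(a) ∘ᵢ b + a ∘ᵢ R(b)`. -/
def iterProd {K A : Type*} [Field K] [AddCommGroup A] [Module K A]
    (mul : A →ₗ[K] A →ₗ[K] A) (R : A →ₗ[K] A) : ℕ → A → A → A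
  | 0, a, b => mul a b
  | n + 1, a, b => iterProd mul R n (R a) b + iterProd mul R n a (R b)

section

variable {K A : Type*} [CommRing K] [AddCommGroup A] [Module K A]

def IsZinbiel (grade : ZMod 2 → Submodule K A) (μ : A → A → A) : Prop :=
  ∀ i j : ZMod 2, ∀ a ∈ grade i, ∀ b ∈ grade j, ∀ c : A,
    μ a (μ b c) = μ (μ a b) c + ((-1 : K) ^ (i.val * j.val)) • μ (μ b a) c

def IsRotaBaxter (mul : A →ₗ[K] A →ₗ[K] A) (R : A →ₗ[K] A) : Prop :=
  ∀ x y : A, mul (R x) (R y) = R (mul (R x) y + mul x (R y))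

def rbProd (mul : A →ₗ[K] A →ₗ[K] A) (R : A →ₗ[K] A) : A →ₗ[K] A →ₗ[K] A :=
  mul ∘ₗ R + mul.compl₂ R

@[simp]
theorem rbProd_apply (mul : A →ₗ[K] A →ₗ[K] A) (R : A →ₗ[K] A) (x y : A) :
    rbProd mul R x y = mul (R x) y + mul x (R y) :=
  rfl

theorem IsRotaBaxter.rbProd {mul : A →ₗ[K] A →ₗ[K] A} {R : A →ₗ[K] A}
    (hRB : IsRotaBaxter mul R) : IsRotaBaxter (rbProd mul R) R := by
  intro x y
  simp only [rbProd_apply, map_add]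
  rw [hRB (R x) y, hRB x (R y), map_add, map_add]

theorem IsZinbiel.rbProd {grade : ZMod 2 → Submodule K A} {mul : A →ₗ[K] A →ₗ[K] A}
    {R : A →ₗ[K] A} (hZ : IsZinbiel grade (mul · ·)) (hRB : IsRotaBaxter mul R)
    (hReven : ∀ i : ZMod 2, ∀ a ∈ grade i, R a ∈ grade i) :
    IsZinbiel grade (rbProd mul R · ·) := by
  intro i j a ha b hb c
  have hRa := hReven i a ha
  have hRb := hReven j b hb
  simp only [rbProd_apply]
  rw [← hRB b c, ← hRB a b, ← hRB b a]
  simp only [map_add, LinearMap.add_apply, hZ i j _ hRa _ hRb c, hZ i j _ hRa b hb (R c),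
    hZ i j a ha _ hRb (R c), smul_add]
  abel

end

theorem iterProd_succ {K A : Type*} [Field K] [AddCommGroup A] [Module K A]
    (mul : A →ₗ[K] A →ₗ[K] A) (R : A →ₗ[K] A) (n : ℕ) :
    iterProd mul R (n + 1) = iterProd (rbProd mul R) R n := by
  induction n generalizing mul with
  | zero => rfl
  | succ n ih =>
    funext a b
    simp only [iterProd, ← ih]

theorem IsZinbiel.iterProd {K A : Type*} [Field K] [AddCommGroup A] [Module K A]
    {grade : ZMod 2 → Submodule K A} {mul : A →ₗ[K] A →ₗ[K] A} {R : A →ₗ[K] A}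
    (hZ : IsZinbiel grade (mul · ·)) (hRB : IsRotaBaxter mul R)
    (hReven : ∀ i : ZMod 2, ∀ a ∈ grade i, R a ∈ grade i) (n : ℕ) :
    IsZinbiel grade (iterProd mul R n) := by
  induction n generalizing mul with
  | zero => exact hZ
  | succ n ih =>
    rw [iterProd_succ]
    exact ih (hZ.rbProd hRB hReven) hRB.rbProd

theorem iterProd_zinbiel_general {K A : Type*} [Field K]
    [AddCommGroup A] [Module K A]
    (grade : ZMod 2 → Submodule K A)
    (mul : A →ₗ[K] A →ₗ[K] A)
    (hZinbiel : ∀ i j : ZMod 2, ∀ a ∈ grade i, ∀ b ∈ grade j, ∀ c : A,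
      mul a (mul b c) =
        mul (mul a b) c + ((-1 : K) ^ (i.val * j.val)) • mul (mul b a) c)
    (R : A →ₗ[K] A)
    (hReven : ∀ i : ZMod 2, ∀ a ∈ grade i, R a ∈ grade i)
    (hRB : ∀ x y : A, mul (R x) (R y) = R (mul (R x) y + mul x (R y))) :
    ∀ n : ℕ, ∀ i j k : ZMod 2, ∀ a ∈ grade i, ∀ b ∈ grade j, ∀ c ∈ grade k,
      iterProd mul R n a (iterProd mul R n b c) =
        iterProd mul R n (iterProd mul R n a b) c +
          ((-1 : K) ^ (i.val * j.val)) • iterProd mul R n (iterProd mul R n b a) c :=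
  fun n i j _ a ha b hb c _ => IsZinbiel.iterProd hZinbiel hRB hReven n i j a ha b hb c

/-- Each product `∘ᵢ` built from a Zinbiel superalgebra `(A,∘)` and an even
Rota–Baxter operator `R` makes `A` a Zinbiel superalgebra. -/
theorem iterProd_zinbiel {K A : Type*} [Field K] [CharZero K]
    [AddCommGroup A] [Module K A]
    (grade : ZMod 2 → Submodule K A)
    (mul : A →ₗ[K] A →ₗ[K] A)
    (hgr : ∀ i j : ZMod 2, ∀ a ∈ grade i, ∀ b ∈ grade j, mul a b ∈ grade (i + j))
    (hZinbiel : ∀ i j : ZMod 2, ∀ a ∈ grade i, ∀ b ∈ grade j, ∀ c : A,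
      mul a (mul b c) =
        mul (mul a b) c + ((-1 : K) ^ (i.val * j.val)) • mul (mul b a) c)
    (R : A →ₗ[K] A)
    (hReven : ∀ i : ZMod 2, ∀ a ∈ grade i, R a ∈ grade i)
    (hRB : ∀ x y : A, mul (R x) (R y) = R (mul (R x) y + mul x (R y))) :
    ∀ n : ℕ, ∀ i j k : ZMod 2, ∀ a ∈ grade i, ∀ b ∈ grade j, ∀ c ∈ grade k,
      iterProd mul R n a (iterProd mul R n b c) =
        iterProd mul R n (iterProd mul R n a b) c +
          ((-1 : K) ^ (i.val * j.val)) • iterProd mul R n (iterProd mul R n b a) c :=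
  iterProd_zinbiel_general grade mul hZinbiel R hReven hRB
end

section
/- Let X = {x, y} with |x| = 1, |y| = 0, and let ST(X) be the free special Tortkara superalgebra inside the free Zinbiel superalgebra Zin(X). Let I be the ideal of ST(X) generated by f₁ = ȳyx (= yyx − yxy with appropriate Koszul signs, i.e. the skew-right-commutative element of yyx) and f₂ = yxx (a left-normed monomial, which lies in ST(X) since x is odd). Let I′ be the ideal of Zin(X) generated by I. Then the element ω = −(x̄yxy) − yyxx lies in I′ ∩ ST(X) but not in I; consequently the quotient ST(X)/I is an exceptional (non-special) Tortkara superalgebra. -/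
noncomputable section

/-- Parity of a word over a `ZMod 2`-graded alphabet. -/
def wparity {X : Type*} (px : X → ZMod 2) (l : List X) : ZMod 2 := (l.map px).sum

/-- The super shuffle of two basis words, as an element of the free module on words. -/
def shw (K : Type*) [Field K] {X : Type*} (px : X → ZMod 2) :
    List X → List X → (List X →₀ K)
  | [], v => Finsupp.single v 1
  | a :: u, [] => Finsupp.single (a :: u) 1
  | a :: u, b :: v =>
      Finsupp.mapDomain (List.cons a) (shw K px u (b :: v)) +
        ((-1 : K) ^ ((px b).val * (wparity px (a :: u)).val)) •
          Finsupp.mapDomain (List.cons b) (shw K px (a :: u) v)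
  termination_by u v => u.length + v.length
  decreasing_by all_goals simp +arith +decide

/-- The Zinbiel product of two basis words:
`u ∘ (w ++ [x]) = (u ⊔⊔ w) x` (and `u ∘ [] = 0`, unused). -/
def zw (K : Type*) [Field K] {X : Type*} (px : X → ZMod 2) :
    List X → List X → (List X →₀ K)
  | _, [] => 0
  | u, b :: v =>
      Finsupp.mapDomain (fun l => l ++ [(b :: v).getLast (List.cons_ne_nil b v)])
        (shw K px u ((b :: v).dropLast))

/-- The Zinbiel product on the free Zinbiel superalgebra `Zin(X)`, realized as the
free module on (nonempty) words over `X`. -/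
def zmul (K : Type*) [Field K] {X : Type*} (px : X → ZMod 2)
    (f g : List X →₀ K) : List X →₀ K :=
  f.sum fun u cu => g.sum fun v cv => (cu * cv) • zw K px u v

/-- The supercommutator `[f,g] = fg − (−1)^{|f||g|}gf` on `Zin(X)`, extended
bilinearly from homogeneous (basis-word) components. -/
def zbrk (K : Type*) [Field K] {X : Type*} (px : X → ZMod 2)
    (f g : List X →₀ K) : List X →₀ K :=
  zmul K px f g -
    f.sum fun u cu => g.sum fun v cv =>
      (cu * cv * (-1 : K) ^ ((wparity px u).val * (wparity px v).val)) • zw K px v u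

/-- The map `p` on basis words: `p(x) = −x`, `p(xy) = (−1)^{|x||y|}yx`, and
`p(u y z) = (−1)^{|y||z|} u z y` for words of length ≥ 3. -/
def pw (K : Type*) [Field K] {X : Type*} (px : X → ZMod 2) (l : List X) :
    List X →₀ K :=
  match l.reverse with
  | [] => 0
  | [a] => -Finsupp.single [a] 1
  | z :: y :: u =>
      ((-1 : K) ^ ((px y).val * (px z).val)) • Finsupp.single ((y :: z :: u).reverse) 1

/-- The linear extension of `p` to `Zin(X)`. -/
def pmap (K : Type*) [Field K] {X : Type*} (px : X → ZMod 2)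
    (f : List X →₀ K) : List X →₀ K :=
  f.sum fun l c => c • pw K px l

/-- Membership in the free special Tortkara superalgebra `ST(X)`: the
super-subalgebra of `(Zin(X), [·,·])` generated by `X`. -/
inductive InST (K : Type*) [Field K] {X : Type*} (px : X → ZMod 2) :
    (List X →₀ K) → Prop
  | gen (x : X) : InST K px (Finsupp.single [x] 1)
  | zero : InST K px 0
  | add {f g : List X →₀ K} : InST K px f → InST K px g → InST K px (f + g)
  | smul (c : K) {f : List X →₀ K} : InST K px f → InST K px (c • f)
  | br {f g : List X →₀ K} : InST K px f → InST K px g → InST K px (zbrk K px f g)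


/-- Membership in the ideal of the Tortkara superalgebra `ST(X)` generated by a set
`S ⊆ ST(X)`. -/
inductive InIdealST (K : Type*) [Field K] {X : Type*} (px : X → ZMod 2)
    (S : Set (List X →₀ K)) : (List X →₀ K) → Prop
  | gen {f : List X →₀ K} : f ∈ S → InIdealST K px S f
  | zero : InIdealST K px S 0
  | add {f g : List X →₀ K} :
      InIdealST K px S f → InIdealST K px S g → InIdealST K px S (f + g)
  | smul (c : K) {f : List X →₀ K} : InIdealST K px S f → InIdealST K px S (c • f)
  | brL {g f : List X →₀ K} :
      InST K px g → InIdealST K px S f → InIdealST K px S (zbrk K px g f)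
  | brR {g f : List X →₀ K} :
      InST K px g → InIdealST K px S f → InIdealST K px S (zbrk K px f g)

/-- Membership in the ideal of the Zinbiel superalgebra `Zin(X)` generated by a set
`S`. -/
inductive InIdealZin (K : Type*) [Field K] {X : Type*} (px : X → ZMod 2)
    (S : Set (List X →₀ K)) : (List X →₀ K) → Prop
  | gen {f : List X →₀ K} : f ∈ S → InIdealZin K px S f
  | zero : InIdealZin K px S 0
  | add {f g : List X →₀ K} :
      InIdealZin K px S f → InIdealZin K px S g → InIdealZin K px S (f + g)
  | smul (c : K) {f : List X →₀ K} : InIdealZin K px S f → InIdealZin K px S (c • f)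
  | mulL (g : List X →₀ K) {f : List X →₀ K} :
      InIdealZin K px S f → InIdealZin K px S (zmul K px g f)
  | mulR (g : List X →₀ K) {f : List X →₀ K} :
      InIdealZin K px S f → InIdealZin K px S (zmul K px f g)

/-- The parity function on the two-element alphabet `{x, y} = {true, false}`:
`x = true` is odd, `y = false` is even. -/
def pxy : Bool → ZMod 2 := fun b => if b then 1 else 0

/-!
`ω = x∘f₁ − y∘f₂` lies in the Zinbiel ideal generated by `f₁, f₂`, and `ω = −¼ [[x,y],[x,y]]`
lies in `ST(X)`. To see `ω ∉ I`, grade by word length: bracketing with an element of `ST(X)`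
raises the length by at least one, so `I` lies in `span {f₁, f₂} + Zin(X)_{≥4}`, and the
length-4 part of a bracket with an element of `I` only comes from brackets of `x`, `y` with
`f₁`, `f₂`. The functional `φ = 2·(xyxy)* + (yyxx)* + 2·(yxxy)*` kills all of these, hence all
of `I`, while `φ(ω) = −3`.
-/

section Bilinear

variable (K : Type*) [Field K] {X : Type*} (px : X → ZMod 2)

def zmulLin : (List X →₀ K) →ₗ[K] (List X →₀ K) →ₗ[K] (List X →₀ K) :=
  Finsupp.linearCombination K fun u => Finsupp.linearCombination K (zw K px u)

def zbrkLin : (List X →₀ K) →ₗ[K] (List X →₀ K) →ₗ[K] (List X →₀ K) :=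
  Finsupp.linearCombination K fun u => Finsupp.linearCombination K fun v =>
    zw K px u v - ((-1 : K) ^ ((wparity px u).val * (wparity px v).val)) • zw K px v u

variable {K px}

theorem zmulLin_apply (f g : List X →₀ K) : zmulLin K px f g = zmul K px f g := by
  simp only [zmulLin, zmul, Finsupp.linearCombination_apply, LinearMap.finsupp_sum_apply,
    LinearMap.smul_apply, Finsupp.smul_sum, smul_smul]

theorem zbrkLin_apply (f g : List X →₀ K) : zbrkLin K px f g = zbrk K px f g := by
  simp only [zbrkLin, zbrk, zmul, Finsupp.linearCombination_apply, LinearMap.finsupp_sum_apply,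
    LinearMap.smul_apply, Finsupp.smul_sum, smul_smul, smul_sub, ← Finsupp.sum_sub, mul_assoc]

theorem zmul_single_single (u v : List X) (a b : K) :
    zmul K px (Finsupp.single u a) (Finsupp.single v b) = (a * b) • zw K px u v := by
  rw [← zmulLin_apply, zmulLin, Finsupp.linearCombination_single, LinearMap.smul_apply,
    Finsupp.linearCombination_single, smul_smul, mul_comm]

theorem zmul_sub_right (f g h : List X →₀ K) :
    zmul K px f (g - h) = zmul K px f g - zmul K px f h := by
  simp only [← zmulLin_apply, map_sub]

theorem zbrk_single_single (u v : List X) (a b : K) :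
    zbrk K px (Finsupp.single u a) (Finsupp.single v b) = (a * b) •
      (zw K px u v - (-1 : K) ^ ((wparity px u).val * (wparity px v).val) • zw K px v u) := by
  rw [← zbrkLin_apply, zbrkLin, Finsupp.linearCombination_single, LinearMap.smul_apply,
    Finsupp.linearCombination_single, smul_smul, mul_comm]

theorem zbrk_add_left (f g h : List X →₀ K) :
    zbrk K px (f + g) h = zbrk K px f h + zbrk K px g h := by
  simp only [← zbrkLin_apply, map_add, LinearMap.add_apply]

theorem zbrk_add_right (f g h : List X →₀ K) :
    zbrk K px f (g + h) = zbrk K px f g + zbrk K px f h := by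
  simp only [← zbrkLin_apply, map_add]

theorem zbrk_sub_left (f g h : List X →₀ K) :
    zbrk K px (f - g) h = zbrk K px f h - zbrk K px g h := by
  simp only [← zbrkLin_apply, map_sub, LinearMap.sub_apply]

theorem zbrk_sub_right (f g h : List X →₀ K) :
    zbrk K px f (g - h) = zbrk K px f g - zbrk K px f h := by
  simp only [← zbrkLin_apply, map_sub]

theorem zbrk_smul_left (c : K) (f g : List X →₀ K) :
    zbrk K px (c • f) g = c • zbrk K px f g := by
  simp only [← zbrkLin_apply, map_smul, LinearMap.smul_apply]

theorem zbrk_smul_right (c : K) (f g : List X →₀ K) :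
    zbrk K px f (c • g) = c • zbrk K px f g := by
  simp only [← zbrkLin_apply, map_smul]

end Bilinear

theorem Finsupp.mapDomain_neg {α β M : Type*} [AddCommGroup M] (f : α → β) (v : α →₀ M) :
    Finsupp.mapDomain f (-v) = -Finsupp.mapDomain f v :=
  map_neg (Finsupp.mapDomain.addMonoidHom f) v

theorem Finsupp.mapDomain_mem_supported {R M α β : Type*} [Semiring R] [AddCommMonoid M]
    [Module R M] {f : α → β} {s : Set α} {t : Set β} (hf : Set.MapsTo f s t) {l : α →₀ M}
    (hl : l ∈ Finsupp.supported M R s) : Finsupp.mapDomain f l ∈ Finsupp.supported M R t :=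
  Finsupp.supported_mono hf.image_subset <|
    Finsupp.lmapDomain_supported M R f s ▸ Submodule.mem_map_of_mem hl

section Length

variable {K : Type*} [Field K] {X : Type*} {px : X → ZMod 2}

theorem shw_mem_supported (u v : List X) :
    shw K px u v ∈ Finsupp.supported K K {w | w.length = u.length + v.length} := by
  induction u, v using shw.induct with
  | case1 v => rw [shw]; exact Finsupp.single_mem_supported K _ (by simp)
  | case2 a u => rw [shw]; exact Finsupp.single_mem_supported K _ (by simp)
  | case3 a u b v ih₁ ih₂ =>
    rw [shw]
    refine add_mem (Finsupp.mapDomain_mem_supported ?_ ih₁)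
      (Submodule.smul_mem _ _ (Finsupp.mapDomain_mem_supported ?_ ih₂)) <;>
    · intro w hw
      simp_all only [Set.mem_ofPred_eq, List.length_cons]
      omega

theorem zw_mem_supported (u v : List X) :
    zw K px u v ∈ Finsupp.supported K K {w | w.length = u.length + v.length} := by
  rcases v with _ | ⟨b, v⟩
  · exact zero_mem _
  · refine Finsupp.mapDomain_mem_supported (fun w hw => ?_) (shw_mem_supported u _)
    simp_all [Set.mem_ofPred_eq]
    omega

end Length

section Filtration

variable (R : Type*) [Semiring R] (X : Type*)

def lengthFiltration (n : ℕ) : Submodule R (List X →₀ R) :=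
  Finsupp.supported R R {w | n ≤ w.length}

variable {R X}

theorem lengthFiltration_antitone : Antitone (lengthFiltration R X) :=
  fun _ _ hmn => Finsupp.supported_mono fun _ hw => le_trans hmn hw

theorem le_length_of_mem_lengthFiltration {n : ℕ} {f : List X →₀ R}
    (hf : f ∈ lengthFiltration R X n) {w : List X} (hw : f w ≠ 0) : n ≤ w.length := by
  by_contra h
  exact hw ((Finsupp.mem_supported' R f).1 hf w h)

end Filtration

section LengthGrading

variable {K : Type*} [Field K] {X : Type*} {px : X → ZMod 2}

theorem zbrk_mem_lengthFiltration {m n : ℕ} {f g : List X →₀ K}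
    (hf : f ∈ lengthFiltration K X m) (hg : g ∈ lengthFiltration K X n) :
    zbrk K px f g ∈ lengthFiltration K X (m + n) := by
  have hzw : ∀ u v : List X, m + n ≤ u.length + v.length →
      zw K px u v ∈ lengthFiltration K X (m + n) := by
    intro u v huv
    refine Finsupp.supported_mono ?_ (zw_mem_supported u v)
    intro w (hw : w.length = _)
    exact show m + n ≤ w.length by omega
  rw [← zbrkLin_apply, zbrkLin, Finsupp.linearCombination_apply, LinearMap.finsupp_sum_apply]
  refine Submodule.finsuppSum_mem _ _ _ _ fun u hu => ?_
  rw [LinearMap.smul_apply, Finsupp.linearCombination_apply]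
  refine Submodule.smul_mem _ _ (Submodule.finsuppSum_mem _ _ _ _ fun v hv => ?_)
  have huv := add_le_add (le_length_of_mem_lengthFiltration hf hu)
    (le_length_of_mem_lengthFiltration hg hv)
  exact Submodule.smul_mem _ _
    (sub_mem (hzw u v huv) (Submodule.smul_mem _ _ (hzw v u (by omega))))

theorem InST.mem_lengthFiltration_one {g : List X →₀ K} (hg : InST K px g) :
    g ∈ lengthFiltration K X 1 := by
  induction hg with
  | gen a => exact Finsupp.single_mem_supported K _ (by simp)
  | zero => exact zero_mem _
  | add _ _ ihf ihg => exact add_mem ihf ihg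
  | smul c _ ih => exact Submodule.smul_mem _ c ih
  | br _ _ ihf ihg =>
    exact lengthFiltration_antitone (by norm_num) (zbrk_mem_lengthFiltration ihf ihg)

end LengthGrading

section TwoGenerators

variable (K : Type*) [Field K]

def rel₁ : List Bool →₀ K :=
  Finsupp.single [false, false, true] 1 - Finsupp.single [false, true, false] 1

def rel₂ : List Bool →₀ K := Finsupp.single [false, true, true] 1

def witness : List Bool →₀ K :=
  -Finsupp.single [true, false, true, false] 1 + Finsupp.single [true, false, false, true] 1 -
    Finsupp.single [false, false, true, true] 1

def phi : (List Bool →₀ K) →ₗ[K] K :=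
  2 • Finsupp.lapply [true, false, true, false] + Finsupp.lapply [false, false, true, true] +
    2 • Finsupp.lapply [false, true, true, false]

def envelope : Submodule K (List Bool →₀ K) :=
  (Submodule.span K {rel₁ K, rel₂ K} ⊔ lengthFiltration K Bool 4) ⊓ LinearMap.ker (phi K)

variable {K}

theorem witness_eq_zmul : witness K = zmul K pxy (Finsupp.single [true] 1) (rel₁ K) +
    (-1 : K) • zmul K pxy (Finsupp.single [false] 1) (rel₂ K) := by
  simp [witness, rel₁, rel₂, zmul_sub_right, zmul_single_single, zw, shw, wparity, pxy,
    Finsupp.mapDomain_single, Finsupp.mapDomain_add, ZMod.val_one]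
  module

theorem zbrk_xy_zbrk_xy :
    zbrk K pxy (zbrk K pxy (Finsupp.single [true] 1) (Finsupp.single [false] 1))
      (zbrk K pxy (Finsupp.single [true] 1) (Finsupp.single [false] 1)) =
      (-4 : K) • witness K := by
  simp [witness, zbrk_sub_left, zbrk_sub_right, zbrk_single_single, zw, shw, wparity, pxy,
    Finsupp.mapDomain_single, Finsupp.mapDomain_add, Finsupp.mapDomain_neg, ZMod.val_one]
  module

theorem phi_apply (h : List Bool →₀ K) :
    phi K h = 2 * h [true, false, true, false] + h [false, false, true, true] +
      2 * h [false, true, true, false] := by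
  simp [phi, two_mul]

theorem phi_witness : phi K (witness K) = -3 := by
  norm_num [witness, phi_apply]

theorem phi_zbrk_single_rel (c : Bool) :
    phi K (zbrk K pxy (Finsupp.single [c] 1) (rel₁ K)) = 0 ∧
      phi K (zbrk K pxy (rel₁ K) (Finsupp.single [c] 1)) = 0 ∧
      phi K (zbrk K pxy (Finsupp.single [c] 1) (rel₂ K)) = 0 ∧
      phi K (zbrk K pxy (rel₂ K) (Finsupp.single [c] 1)) = 0 := by
  cases c <;>
  norm_num [rel₁, rel₂, zbrk_sub_left, zbrk_sub_right, zbrk_single_single, zw, shw, wparity, pxy,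
    phi_apply, Finsupp.mapDomain_single, Finsupp.mapDomain_add, ZMod.val_one]

theorem phi_eq_zero_of_mem_lengthFiltration {h : List Bool →₀ K}
    (hh : h ∈ lengthFiltration K Bool 5) : phi K h = 0 := by
  have hvan : ∀ w : List Bool, w.length = 4 → h w = 0 := fun w hw =>
    (Finsupp.mem_supported' K h).1 hh w (by simp [Set.mem_ofPred_eq, hw])
  simp [phi_apply, hvan]

theorem lengthFiltration_one_le_span_sup :
    lengthFiltration K Bool 1 ≤
      Submodule.span K {Finsupp.single [true] 1, Finsupp.single [false] 1} ⊔
        lengthFiltration K Bool 2 := by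
  intro g hg
  refine Submodule.mem_sup.2 ⟨g [true] • Finsupp.single [true] 1 +
    g [false] • Finsupp.single [false] 1, Submodule.mem_span_pair.2 ⟨_, _, rfl⟩, g - _, ?_,
    add_sub_cancel _ _⟩
  refine (Finsupp.mem_supported' K _).2 fun w hw => ?_
  simp only [Set.mem_ofPred_eq, not_le] at hw
  rcases w with _ | ⟨c, _ | ⟨d, w⟩⟩
  · simpa using (Finsupp.mem_supported' K g).1 hg [] (by simp [Set.mem_ofPred_eq])
  · cases c <;> simp
  · simp at hw

theorem span_rel_le_lengthFiltration :
    Submodule.span K {rel₁ K, rel₂ K} ≤ lengthFiltration K Bool 3 := by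
  refine Submodule.span_le.2 ?_
  rintro r (rfl | rfl)
  · exact sub_mem (Finsupp.single_mem_supported K _ (by simp [Set.mem_ofPred_eq]))
      (Finsupp.single_mem_supported K _ (by simp [Set.mem_ofPred_eq]))
  · exact Finsupp.single_mem_supported K _ (by simp [Set.mem_ofPred_eq])

theorem phi_zbrk_of_mem_lengthFiltration {m n : ℕ} {f g : List Bool →₀ K}
    (hf : f ∈ lengthFiltration K Bool m) (hg : g ∈ lengthFiltration K Bool n)
    (hmn : 5 ≤ m + n) : phi K (zbrk K pxy f g) = 0 ∧ phi K (zbrk K pxy g f) = 0 :=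
  ⟨phi_eq_zero_of_mem_lengthFiltration <|
      lengthFiltration_antitone hmn <| zbrk_mem_lengthFiltration hf hg,
    phi_eq_zero_of_mem_lengthFiltration <|
      lengthFiltration_antitone (by omega) <| zbrk_mem_lengthFiltration hg hf⟩

theorem phi_zbrk_of_mem_span {g r : List Bool →₀ K}
    (hg : g ∈ Submodule.span K {Finsupp.single [true] 1, Finsupp.single [false] 1})
    (hr : r ∈ Submodule.span K {rel₁ K, rel₂ K}) :
    phi K (zbrk K pxy g r) = 0 ∧ phi K (zbrk K pxy r g) = 0 := by
  obtain ⟨a, b, rfl⟩ := Submodule.mem_span_pair.1 hg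
  obtain ⟨c, d, rfl⟩ := Submodule.mem_span_pair.1 hr
  simp only [zbrk_add_left, zbrk_add_right, zbrk_smul_left, zbrk_smul_right, map_add, map_smul,
    phi_zbrk_single_rel, smul_zero, add_zero, and_self]

theorem phi_zbrk {g h : List Bool →₀ K} (hg : g ∈ lengthFiltration K Bool 1)
    (hh : h ∈ Submodule.span K {rel₁ K, rel₂ K} ⊔ lengthFiltration K Bool 4) :
    phi K (zbrk K pxy g h) = 0 ∧ phi K (zbrk K pxy h g) = 0 := by
  obtain ⟨g₁, hg₁, g₂, hg₂, rfl⟩ := Submodule.mem_sup.1 (lengthFiltration_one_le_span_sup hg)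
  obtain ⟨r, hr, h₂, hh₂, rfl⟩ := Submodule.mem_sup.1 hh
  have hg₁' : g₁ ∈ lengthFiltration K Bool 1 := by
    simpa using sub_mem hg (lengthFiltration_antitone (by norm_num) hg₂)
  obtain ⟨e₁, e₁'⟩ := phi_zbrk_of_mem_span hg₁ hr
  obtain ⟨e₂, e₂'⟩ := phi_zbrk_of_mem_lengthFiltration hg₁' hh₂ le_rfl
  obtain ⟨e₃, e₃'⟩ :=
    phi_zbrk_of_mem_lengthFiltration hg₂ (span_rel_le_lengthFiltration hr) le_rfl
  obtain ⟨e₄, e₄'⟩ := phi_zbrk_of_mem_lengthFiltration hg₂ hh₂ (by norm_num)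
  simp only [zbrk_add_left, zbrk_add_right, map_add, e₁, e₁', e₂, e₂', e₃, e₃', e₄, e₄',
    add_zero, and_self]

theorem zbrk_mem_envelope {g h : List Bool →₀ K} (hg : InST K pxy g) (hh : h ∈ envelope K) :
    zbrk K pxy g h ∈ envelope K ∧ zbrk K pxy h g ∈ envelope K := by
  have hg₁ := hg.mem_lengthFiltration_one
  have hh₃ : h ∈ lengthFiltration K Bool 3 :=
    (sup_le span_rel_le_lengthFiltration (lengthFiltration_antitone (by norm_num)) :
      _ ≤ lengthFiltration K Bool 3) hh.1
  obtain ⟨e, e'⟩ := phi_zbrk hg₁ hh.1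
  exact ⟨⟨Submodule.mem_sup_right (zbrk_mem_lengthFiltration hg₁ hh₃), e⟩,
    ⟨Submodule.mem_sup_right (zbrk_mem_lengthFiltration hh₃ hg₁), e'⟩⟩

theorem InIdealST.mem_envelope {h : List Bool →₀ K}
    (hh : InIdealST K pxy {rel₁ K, rel₂ K} h) : h ∈ envelope K := by
  induction hh with
  | gen hf =>
    refine ⟨Submodule.mem_sup_left (Submodule.subset_span hf), ?_⟩
    rcases hf with rfl | rfl <;> simp [rel₁, rel₂, phi_apply]
  | zero => exact zero_mem _
  | add _ _ ihf ihg => exact add_mem ihf ihg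
  | smul c _ ih => exact Submodule.smul_mem _ c ih
  | brL hg _ ih => exact (zbrk_mem_envelope hg ih).1
  | brR hg _ ih => exact (zbrk_mem_envelope hg ih).2

end TwoGenerators

/-- For `X = {x, y}` with `x` odd and `y` even, let `I` be the ideal of
`ST(X)` generated by `f₁ = ȳyx = yyx − yxy` and `f₂ = yxx`, and `I′` the Zinbiel ideal
generated by `I`.  Then `ω = −(x̄yxy) − yyxx = −xyxy + xyyx − yyxx` lies in
`I′ ∩ ST(X)` but not in `I`; hence `ST(X)/I` is an exceptional Tortkara superalgebra. -/
theorem exceptional_quotient {K : Type*} [Field K] [CharZero K] :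
    ∀ x y : Bool, x = true → y = false →
    ∀ f₁ f₂ ω : List Bool →₀ K,
      f₁ = Finsupp.single [y, y, x] 1 - Finsupp.single [y, x, y] 1 →
      f₂ = Finsupp.single [y, x, x] 1 →
      ω = -Finsupp.single [x, y, x, y] 1 + Finsupp.single [x, y, y, x] 1 -
            Finsupp.single [y, y, x, x] 1 →
      InIdealZin K pxy {h | InIdealST K pxy {f₁, f₂} h} ω ∧
        InST K pxy ω ∧ ¬ InIdealST K pxy {f₁, f₂} ω := by
  rintro x y rfl rfl f₁ f₂ ω hf₁ hf₂ hω
  obtain rfl : f₁ = rel₁ K := hf₁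
  obtain rfl : f₂ = rel₂ K := hf₂
  obtain rfl : ω = witness K := hω
  refine ⟨?_, ?_, fun hI => ?_⟩
  · rw [witness_eq_zmul]
    exact .add (.mulL _ (.gen (.gen (.inl rfl)))) (.smul _ (.mulL _ (.gen (.gen (.inr rfl)))))
  · have hxy := InST.br (InST.gen (K := K) (px := pxy) true) (InST.gen false)
    rw [← inv_smul_smul₀ (show (-4 : K) ≠ 0 by norm_num) (witness K), ← zbrk_xy_zbrk_xy]
    exact (hxy.br hxy).smul _
  · have hphi : phi K (witness K) = 0 := hI.mem_envelope.2
    rw [phi_witness] at hphi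
    norm_num at hphi

end
end

section
/- The 3-dimensional superalgebra T with even basis e₁, e₂ and odd basis e₃, with nonzero products e₁·e₂ = e₁, e₁·e₃ = e₃ (extended by super anti-commutativity: e₂·e₁ = −e₁, e₃·e₁ = −e₃, all other products zero), is a Tortkara superalgebra but not a Lie superalgebra: the super Jacobian J_s(e₁, e₂, e₃) = (e₁e₂)e₃ − e₁(e₂e₃) − (−1)^{|e₂||e₃|}(e₁e₃)e₂ equals e₃ ≠ 0, while the super Tortkara identity holds for all homogeneous quadruples. -/
/-!
Forgetting the grading, the product is anticommutative and satisfies the ordinary Tortkara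
identity on all of `K³` (`t218Js K 0 0` is the ungraded Jacobian); both are polynomial identities
in the coordinates. A sign `-1` in the super identities only arises when two of the arguments are
odd, and then the term it multiplies vanishes: a product with an odd factor is odd, and the
product of two odd elements is zero. So the super identities coincide with the ungraded ones.
-/

/-- The 3-dimensional superalgebra `T²₁|₁⁸` with even basis `e₁, e₂`, odd basis `e₃`,
and nonzero products `e₁e₂ = e₁ = −e₂e₁`, `e₁e₃ = e₃ = −e₃e₁`. Coordinates:
`0 ↦ e₁`, `1 ↦ e₂`, `2 ↦ e₃`. -/
def t218mul (K : Type*) [Field K] (a b : Fin 3 → K) : Fin 3 → K :=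
  fun i =>
    if i = 0 then a 0 * b 1 - a 1 * b 0
    else if i = 2 then a 0 * b 2 - a 2 * b 0
    else 0

/-- Homogeneity of parity `i`: even elements lie in `span{e₁,e₂}`, odd ones in
`span{e₃}`. -/
def t218homog (K : Type*) [Field K] (i : ZMod 2) (a : Fin 3 → K) : Prop :=
  if i = 0 then a 2 = 0 else a 0 = 0 ∧ a 1 = 0

/-- The super Jacobian of the product, for homogeneous arguments of parities
`i, j, k`: `J_s(a,b,c) = (ab)c − a(bc) − (−1)^{|b||c|}(ac)b`. -/
def t218Js (K : Type*) [Field K] (j k : ZMod 2) (a b c : Fin 3 → K) : Fin 3 → K :=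
  t218mul K (t218mul K a b) c - t218mul K a (t218mul K b c) -
    ((-1 : K) ^ (j.val * k.val)) • t218mul K (t218mul K a c) b

theorem ZMod.two_eq_zero_or_eq_one (j : ZMod 2) : j = 0 ∨ j = 1 := by
  decide +revert

theorem neg_one_pow_val_mul_smul {R M : Type*} [Ring R] [AddCommGroup M] [Module R M]
    {j k : ZMod 2} {v : M} (h : j = 1 → k = 1 → v = 0) : ((-1 : R) ^ (j.val * k.val)) • v = v := by
  rcases j.two_eq_zero_or_eq_one with rfl | rfl <;>
    rcases k.two_eq_zero_or_eq_one with rfl | rfl <;> simp_all [ZMod.val_one]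

section T218

variable {K : Type*} [Field K] {j k : ZMod 2} {a b c d : Fin 3 → K}

theorem t218mul_anticomm (a b : Fin 3 → K) : t218mul K a b = -t218mul K b a := by
  funext x
  fin_cases x <;> simp [t218mul] <;> ring

theorem t218mul_tortkara (a b c d : Fin 3 → K) :
    t218mul K (t218mul K a b) (t218mul K c d) - t218mul K (t218mul K a d) (t218mul K b c) =
      t218mul K (t218Js K 0 0 a b c) d + t218mul K b (t218Js K 0 0 a c d) := by
  funext x
  fin_cases x <;> simp [t218mul, t218Js] <;> ring

theorem t218homog_one_iff : t218homog K 1 a ↔ a 0 = 0 ∧ a 1 = 0 := by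
  simp [t218homog]

theorem t218homog_one_t218mul_of_left (ha : t218homog K 1 a) :
    t218homog K 1 (t218mul K a b) := by
  rw [t218homog_one_iff] at ha ⊢
  simp [t218mul, ha]

theorem t218homog_one_t218mul_of_right (hb : t218homog K 1 b) :
    t218homog K 1 (t218mul K a b) := by
  rw [t218homog_one_iff] at hb ⊢
  simp [t218mul, hb]

theorem t218homog_one_t218mul_of_add_eq_one (hb : t218homog K j b) (hc : t218homog K k c)
    (h : j + k = 1) : t218homog K 1 (t218mul K b c) := by
  rcases j.two_eq_zero_or_eq_one with rfl | rfl
  · rw [zero_add] at h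
    subst h
    exact t218homog_one_t218mul_of_right hc
  · exact t218homog_one_t218mul_of_left hb

theorem t218homog_one_t218Js (ha : t218homog K 1 a) : t218homog K 1 (t218Js K j k a b c) := by
  rw [t218homog_one_iff] at ha ⊢
  simp [t218Js, t218mul, ha]

theorem t218mul_eq_zero_of_t218homog_one (ha : t218homog K 1 a) (hb : t218homog K 1 b) :
    t218mul K a b = 0 := by
  rw [t218homog_one_iff] at ha hb
  funext x
  fin_cases x <;> simp [t218mul, ha, hb]

theorem t218mul_super_anticomm {i : ZMod 2} (ha : t218homog K i a) (hb : t218homog K j b) :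
    t218mul K a b = -(((-1 : K) ^ (i.val * j.val)) • t218mul K b a) := by
  rw [neg_one_pow_val_mul_smul fun hi hj ↦ t218mul_eq_zero_of_t218homog_one (hj ▸ hb) (hi ▸ ha),
    ← t218mul_anticomm]

theorem t218Js_eq_t218Js_zero (hb : t218homog K j b) (hc : t218homog K k c) :
    t218Js K j k a b c = t218Js K 0 0 a b c := by
  rw [t218Js, neg_one_pow_val_mul_smul fun hj hk ↦ t218mul_eq_zero_of_t218homog_one
    (t218homog_one_t218mul_of_right (hk ▸ hc)) (hj ▸ hb)]
  simp [t218Js]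

theorem t218mul_super_tortkara {i l : ZMod 2} (ha : t218homog K i a) (hb : t218homog K j b)
    (hc : t218homog K k c) (hd : t218homog K l d) :
    t218mul K (t218mul K a b) (t218mul K c d) -
        ((-1 : K) ^ (l.val * ((j + k : ZMod 2)).val)) •
          t218mul K (t218mul K a d) (t218mul K b c) =
      t218mul K (t218Js K j k a b c) d +
        ((-1 : K) ^ (i.val * j.val)) • t218mul K b (t218Js K k l a c d) := by
  rw [t218Js_eq_t218Js_zero hb hc, t218Js_eq_t218Js_zero hc hd,
    neg_one_pow_val_mul_smul fun hl hjk ↦ t218mul_eq_zero_of_t218homog_one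
      (t218homog_one_t218mul_of_right (hl ▸ hd)) (t218homog_one_t218mul_of_add_eq_one hb hc hjk),
    neg_one_pow_val_mul_smul fun hi hj ↦ t218mul_eq_zero_of_t218homog_one (hj ▸ hb)
      (t218homog_one_t218Js (hi ▸ ha))]
  exact t218mul_tortkara a b c d

end T218

theorem t218_tortkara_not_lie_general (K : Type*) [Field K] :
    -- super anti-commutativity
    (∀ i j : ZMod 2, ∀ a b : Fin 3 → K, t218homog K i a → t218homog K j b →
      t218mul K a b = -(((-1 : K) ^ (i.val * j.val)) • t218mul K b a)) ∧
    -- super Tortkara identity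
    (∀ i j k l : ZMod 2, ∀ a b c d : Fin 3 → K,
      t218homog K i a → t218homog K j b → t218homog K k c → t218homog K l d →
      t218mul K (t218mul K a b) (t218mul K c d) -
          ((-1 : K) ^ (l.val * ((j + k : ZMod 2)).val)) •
            t218mul K (t218mul K a d) (t218mul K b c) =
        t218mul K (t218Js K j k a b c) d +
          ((-1 : K) ^ (i.val * j.val)) • t218mul K b (t218Js K k l a c d)) ∧
    -- not Lie: J_s(e₁,e₂,e₃) = e₃ ≠ 0
    (t218Js K 0 1 (fun i => if i = 0 then 1 else 0) (fun i => if i = 1 then 1 else 0)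
        (fun i => if i = 2 then 1 else 0) =
      (fun i => if i = 2 then 1 else 0)) ∧
    ((fun i => if i = 2 then (1 : K) else 0) : Fin 3 → K) ≠ 0 := by
  refine ⟨fun _ _ _ _ ↦ t218mul_super_anticomm,
    fun _ _ _ _ _ _ _ _ ↦ t218mul_super_tortkara, ?_, fun h ↦ by simpa using congrFun h 2⟩
  funext x
  fin_cases x <;> simp [t218Js, t218mul]

/-- the superalgebra `T⁸₂|₁` is a Tortkara superalgebra (super
anti-commutative and satisfying the super Tortkara identity) but not a Lie
superalgebra: `J_s(e₁,e₂,e₃) = e₃ ≠ 0`. -/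
theorem t218_tortkara_not_lie (K : Type*) [Field K] [CharZero K] :
    -- super anti-commutativity
    (∀ i j : ZMod 2, ∀ a b : Fin 3 → K, t218homog K i a → t218homog K j b →
      t218mul K a b = -(((-1 : K) ^ (i.val * j.val)) • t218mul K b a)) ∧
    -- super Tortkara identity
    (∀ i j k l : ZMod 2, ∀ a b c d : Fin 3 → K,
      t218homog K i a → t218homog K j b → t218homog K k c → t218homog K l d →
      t218mul K (t218mul K a b) (t218mul K c d) -
          ((-1 : K) ^ (l.val * ((j + k : ZMod 2)).val)) •
            t218mul K (t218mul K a d) (t218mul K b c) =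
        t218mul K (t218Js K j k a b c) d +
          ((-1 : K) ^ (i.val * j.val)) • t218mul K b (t218Js K k l a c d)) ∧
    -- not Lie: J_s(e₁,e₂,e₃) = e₃ ≠ 0
    (t218Js K 0 1 (fun i => if i = 0 then 1 else 0) (fun i => if i = 1 then 1 else 0)
        (fun i => if i = 2 then 1 else 0) =
      (fun i => if i = 2 then 1 else 0)) ∧
    ((fun i => if i = 2 then (1 : K) else 0) : Fin 3 → K) ≠ 0 :=
  t218_tortkara_not_lie_general K
end
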